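/- Let K ≥ 3, let ã ∈ ℝ, and let b̃ ∈ ℝ^{K−1} with b̃_1 = 0 (no ordering assumed). Define the conditional surrogate risk R(a,b) := Σ_{y=1}^{K} P_acl(y; ã, b̃) · φ_IT(a, b, y) with φ(u) = log(1 + e^{−u}) (Logistic-IT loss). Then for every a ∈ ℝ and every b ∈ ℝ^{K−1} with b_1 = 0, R(a, b) ≥ R(ã, b̃), with equality if and only if a = ã and b = b̃. (Conditional-risk form of Theorem 5 (f1) for the Logistic-IT loss.) -/

import Mathlib

open Finset

/-- The adjacent categories logit (ACL) model:
`P_acl(y; u, b) = exp(-Σ_{k=1}^{y-1}(b_k - u)) / Σ_{l=1}^{K} exp(-Σ_{k=1}^{l-1}(b_k - u))`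
for labels `y ∈ {1,…,K}`, with biases `b` indexed by `1,…,K-1` (empty sums are 0). -/
noncomputable def Pacl (K : ℕ) (u : ℝ) (b : ℕ → ℝ) (y : ℕ) : ℝ :=
  Real.exp (-(∑ k ∈ Finset.Icc 1 (y - 1), (b k - u))) /
    ∑ l ∈ Finset.Icc 1 K, Real.exp (-(∑ k ∈ Finset.Icc 1 (l - 1), (b k - u)))

/-- The immediate-threshold (IT) loss built from `φ`:
`φ_IT(a,b,1) = φ(b_1 - a)`, `φ_IT(a,b,K) = φ(a - b_{K-1})`, and
`φ_IT(a,b,y) = φ(a - b_{y-1}) + φ(b_y - a)` for `1 < y < K`. -/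
noncomputable def phiIT (K : ℕ) (φ : ℝ → ℝ) (a : ℝ) (b : ℕ → ℝ) (y : ℕ) : ℝ :=
  if y = 1 then φ (b 1 - a)
  else if y = K then φ (a - b (K - 1))
  else φ (a - b (y - 1)) + φ (b y - a)


private lemma tangent (s x : ℝ) (hs : 0 < s) (hs1 : s < 1) :
    s * x ≤ Real.log ((1 - s) + s * Real.exp x) ∧
      (s * x = Real.log ((1 - s) + s * Real.exp x) ↔ x = 0) := by
  have hR : 0 < (1 - s) + s * Real.exp x := by nlinarith [Real.exp_pos x]
  have hconv : Real.exp ((1-s) * 0 + s * x) ≤ (1-s) * Real.exp 0 + s * Real.exp x :=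
    convexOn_exp.2 (Set.mem_univ 0) (Set.mem_univ x) (by linarith) hs.le (by ring)
  constructor
  · rw [Real.le_log_iff_exp_le hR]
    calc Real.exp (s * x) = Real.exp ((1-s) * 0 + s*x) := by ring_nf
    _ ≤ (1-s) * Real.exp 0 + s * Real.exp x := hconv
    _ = (1 - s) + s * Real.exp x := by simp
  · constructor
    · intro h
      by_contra hx
      have hstrict : Real.exp ((1-s) * 0 + s * x) < (1-s) * Real.exp 0 + s * Real.exp x :=
        strictConvexOn_exp.2 (Set.mem_univ 0) (Set.mem_univ x) (fun h0 => hx h0.symm)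
          (by linarith) hs (by ring)
      have hlt : s * x < Real.log ((1 - s) + s * Real.exp x) := by
        rw [Real.lt_log_iff_exp_lt hR]
        calc Real.exp (s * x) = Real.exp ((1-s) * 0 + s*x) := by ring_nf
        _ < (1-s) * Real.exp 0 + s * Real.exp x := hstrict
        _ = (1 - s) + s * Real.exp x := by simp
      exact absurd h (ne_of_lt hlt)
    · rintro rfl; simp

private lemma logistic_identity (t : ℝ) :
    Real.log (1 + Real.exp (-t)) = Real.log (1 + Real.exp t) - t := by
  have h : 1 + Real.exp (-t) = (1 + Real.exp t) * Real.exp (-t) := by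
    rw [add_mul, one_mul, ← Real.exp_add]
    simp [add_comm]
  rw [h, Real.log_mul (by positivity) (Real.exp_ne_zero _), Real.log_exp]
  ring

private lemma key (p q t τ : ℝ) (hp : 0 < p) (hq : q = p * Real.exp (-τ)) :
    p * Real.log (1 + Real.exp (-τ)) + q * Real.log (1 + Real.exp τ)
      ≤ p * Real.log (1 + Real.exp (-t)) + q * Real.log (1 + Real.exp t) ∧
    (p * Real.log (1 + Real.exp (-t)) + q * Real.log (1 + Real.exp t)
      = p * Real.log (1 + Real.exp (-τ)) + q * Real.log (1 + Real.exp τ) ↔ t = τ) := by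
  have hq0 : 0 < q := by rw [hq]; positivity
  have hτpos : 0 < 1 + Real.exp τ := by positivity
  set s : ℝ := Real.exp τ / (1 + Real.exp τ) with hs_def
  have hs : 0 < s := by positivity
  have hs1 : s < 1 := by rw [hs_def, div_lt_one hτpos]; linarith [Real.exp_pos τ]
  have hee : Real.exp (-τ) * Real.exp τ = 1 := by rw [← Real.exp_add]; simp
  have hps : p = (p + q) * s := by
    rw [hq, hs_def]
    field_simp
    nlinarith [hee]
  have hfact : 1 + Real.exp t = (1 + Real.exp τ) * ((1 - s) + s * Real.exp (t - τ)) := by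
    have h1 : (1 + Real.exp τ) * (1 - s) = 1 := by
      rw [hs_def]; field_simp; ring
    have h2 : (1 + Real.exp τ) * s = Real.exp τ := by
      rw [hs_def]; field_simp
    have h3 : Real.exp τ * Real.exp (t - τ) = Real.exp t := by
      rw [← Real.exp_add]; ring_nf
    calc 1 + Real.exp t = (1 + Real.exp τ) * (1-s) + ((1 + Real.exp τ) * s) * Real.exp (t - τ) := by
          rw [h1, h2, h3]
    _ = (1 + Real.exp τ) * ((1 - s) + s * Real.exp (t - τ)) := by ring
  have hRpos : 0 < (1 - s) + s * Real.exp (t - τ) := by nlinarith [Real.exp_pos (t - τ)]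
  have hlog : Real.log (1 + Real.exp t)
      = Real.log (1 + Real.exp τ) + Real.log ((1 - s) + s * Real.exp (t - τ)) := by
    rw [hfact, Real.log_mul (ne_of_gt hτpos) (ne_of_gt hRpos)]
  set D : ℝ := Real.log ((1 - s) + s * Real.exp (t - τ)) with hD_def
  obtain ⟨hD1, hD2⟩ := tangent s (t - τ) hs hs1
  have hD1' : s * (t - τ) ≤ D := hD1
  have hdiff :
      (p * Real.log (1 + Real.exp (-t)) + q * Real.log (1 + Real.exp t))
        - (p * Real.log (1 + Real.exp (-τ)) + q * Real.log (1 + Real.exp τ))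
      = (p + q) * (D - s * (t - τ)) := by
    rw [logistic_identity t, logistic_identity τ, hlog]
    linear_combination (τ - t) * hps
  constructor
  · have h0 : 0 ≤ (p + q) * (D - s * (t - τ)) :=
      mul_nonneg (by linarith) (by linarith)
    linarith [hdiff]
  · constructor
    · intro h
      have h0 : (p + q) * (D - s * (t - τ)) = 0 := by rw [← hdiff, h]; ring
      have : D - s * (t - τ) = 0 := by
        rcases mul_eq_zero.mp h0 with h' | h'
        · exfalso; linarith
        · exact h'
      have : s * (t - τ) = D := by linarith
      have hx0 : t - τ = 0 := hD2.mp this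
      linarith
    · rintro rfl
      simp

private lemma risk_sum (K : ℕ) (hK : 3 ≤ K) (φ : ℝ → ℝ) (P : ℕ → ℝ) (a : ℝ) (b : ℕ → ℝ) :
    ∑ y ∈ Finset.Icc 1 K, P y * phiIT K φ a b y
      = ∑ k ∈ Finset.Icc 1 (K - 1), (P k * φ (b k - a) + P (k+1) * φ (a - b k)) := by
  have hsplit : ∀ y ∈ Finset.Icc 1 K, P y * phiIT K φ a b y
      = (if y ∈ Finset.Icc 1 (K-1) then P y * φ (b y - a) else 0)
      + (if y ∈ Finset.Icc 2 K then P y * φ (a - b (y-1)) else 0) := by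
    intro y hy
    simp only [Finset.mem_Icc] at hy
    unfold phiIT
    by_cases hy1 : y = 1
    · subst hy1
      rw [if_pos rfl, if_pos (by simp [Finset.mem_Icc]; omega), if_neg (by simp [Finset.mem_Icc])]
      ring
    · by_cases hyK : y = K
      · subst hyK
        rw [if_neg hy1, if_pos rfl, if_neg (by simp [Finset.mem_Icc]; omega),
          if_pos (by simp [Finset.mem_Icc]; omega)]
        ring
      · rw [if_neg hy1, if_neg hyK, if_pos (by simp [Finset.mem_Icc]; omega),
          if_pos (by simp [Finset.mem_Icc]; omega)]
        ring
  rw [Finset.sum_congr rfl hsplit, Finset.sum_add_distrib]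
  have e1 : ∑ y ∈ Finset.Icc 1 K, (if y ∈ Finset.Icc 1 (K-1) then P y * φ (b y - a) else 0)
      = ∑ y ∈ Finset.Icc 1 (K-1), P y * φ (b y - a) := by
    rw [Finset.sum_ite_mem]
    congr 1
    rw [Finset.inter_eq_right]
    intro y hy
    simp only [Finset.mem_Icc] at *
    omega
  have e2 : ∑ y ∈ Finset.Icc 1 K, (if y ∈ Finset.Icc 2 K then P y * φ (a - b (y-1)) else 0)
      = ∑ y ∈ Finset.Icc 2 K, P y * φ (a - b (y-1)) := by
    rw [Finset.sum_ite_mem]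
    congr 1
    rw [Finset.inter_eq_right]
    intro y hy
    simp only [Finset.mem_Icc] at *
    omega
  rw [e1, e2]
  have hmap : Finset.Icc 2 K
      = Finset.map ⟨fun k => k+1, add_left_injective 1⟩ (Finset.Icc 1 (K-1)) := by
    ext y
    simp only [Finset.mem_map, Finset.mem_Icc, Function.Embedding.coeFn_mk]
    constructor
    · rintro ⟨h2, hK'⟩; exact ⟨y - 1, ⟨by omega, by omega⟩, by omega⟩
    · rintro ⟨k, ⟨h1, h2⟩, rfl⟩; omega
  rw [hmap, Finset.sum_map]
  simp only [Function.Embedding.coeFn_mk, Nat.add_sub_cancel]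
  rw [← Finset.sum_add_distrib]

private lemma Pacl_pos (K : ℕ) (hK : 1 ≤ K) (u : ℝ) (b : ℕ → ℝ) (y : ℕ) :
    0 < Pacl K u b y := by
  unfold Pacl
  apply div_pos (Real.exp_pos _)
  apply Finset.sum_pos (fun l _ => Real.exp_pos _)
  exact ⟨1, by simp [Finset.mem_Icc]; omega⟩

private lemma Pacl_ratio (K : ℕ) (u : ℝ) (b : ℕ → ℝ) (k : ℕ) (hk : 1 ≤ k) :
    Pacl K u b (k+1) = Pacl K u b k * Real.exp (-(b k - u)) := by
  unfold Pacl
  rw [div_mul_eq_mul_div, ← Real.exp_add]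
  congr 2
  obtain ⟨m, rfl⟩ : ∃ m, k = m + 1 := ⟨k - 1, by omega⟩
  rw [Nat.add_sub_cancel, Nat.add_sub_cancel,
    Finset.sum_Icc_succ_top (by omega : 1 ≤ m + 1)]
  ring

/-- Conditional-risk form of Theorem 5 (f1) for the Logistic-IT loss: if the conditional
distribution follows the ACL model with parameters `(ã, b̃)` where `b̃_1 = 0` (no
ordering assumed), then the conditional Logistic-IT surrogate risk is uniquely minimized
over all `a ∈ ℝ` and `b` with `b_1 = 0` at `(ã, b̃)`. -/
theorem stmt14 (K : ℕ) (hK : 3 ≤ K) (ta : ℝ) (tb : ℕ → ℝ) (htb1 : tb 1 = 0) :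
    ∀ (a : ℝ) (b : ℕ → ℝ), b 1 = 0 →
      (∑ y ∈ Finset.Icc 1 K, Pacl K ta tb y *
          phiIT K (fun u => Real.log (1 + Real.exp (-u))) a b y)
        ≥ (∑ y ∈ Finset.Icc 1 K, Pacl K ta tb y *
            phiIT K (fun u => Real.log (1 + Real.exp (-u))) ta tb y) ∧
      ((∑ y ∈ Finset.Icc 1 K, Pacl K ta tb y *
            phiIT K (fun u => Real.log (1 + Real.exp (-u))) a b y)
          = (∑ y ∈ Finset.Icc 1 K, Pacl K ta tb y *
              phiIT K (fun u => Real.log (1 + Real.exp (-u))) ta tb y)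
        ↔ (a = ta ∧ ∀ k ∈ Finset.Icc 1 (K - 1), b k = tb k)) := by
  intro a b hb1
  set φ : ℝ → ℝ := fun u => Real.log (1 + Real.exp (-u)) with hφ
  set P : ℕ → ℝ := fun y => Pacl K ta tb y with hP_def
  have hP : ∀ y, 0 < P y := fun y => Pacl_pos K (by omega) ta tb y
  rw [show (∑ y ∈ Finset.Icc 1 K, Pacl K ta tb y * phiIT K φ a b y)
      = ∑ y ∈ Finset.Icc 1 K, P y * phiIT K φ a b y from rfl,
    show (∑ y ∈ Finset.Icc 1 K, Pacl K ta tb y * phiIT K φ ta tb y)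
      = ∑ y ∈ Finset.Icc 1 K, P y * phiIT K φ ta tb y from rfl,
    risk_sum K hK φ P a b, risk_sum K hK φ P ta tb]
  have hkey : ∀ k ∈ Finset.Icc 1 (K-1),
      (P k * φ (tb k - ta) + P (k+1) * φ (ta - tb k))
        ≤ (P k * φ (b k - a) + P (k+1) * φ (a - b k)) ∧
      ((P k * φ (b k - a) + P (k+1) * φ (a - b k))
        = (P k * φ (tb k - ta) + P (k+1) * φ (ta - tb k)) ↔ b k - a = tb k - ta) := by
    intro k hk
    simp only [Finset.mem_Icc] at hk
    have hratio : P (k+1) = P k * Real.exp (-(tb k - ta)) :=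
      Pacl_ratio K ta tb k hk.1
    have h := key (P k) (P (k+1)) (b k - a) (tb k - ta) (hP k) hratio
    have e1 : φ (b k - a) = Real.log (1 + Real.exp (-(b k - a))) := rfl
    have e2 : φ (a - b k) = Real.log (1 + Real.exp (b k - a)) := by
      rw [hφ]; simp only [neg_sub]
    have e3 : φ (tb k - ta) = Real.log (1 + Real.exp (-(tb k - ta))) := rfl
    have e4 : φ (ta - tb k) = Real.log (1 + Real.exp (tb k - ta)) := by
      rw [hφ]; simp only [neg_sub]
    rw [e1, e2, e3, e4]
    exact h
  constructor
  · exact Finset.sum_le_sum (fun k hk => (hkey k hk).1)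
  · constructor
    · intro h
      have hzero : ∑ k ∈ Finset.Icc 1 (K-1),
          ((P k * φ (b k - a) + P (k+1) * φ (a - b k))
            - (P k * φ (tb k - ta) + P (k+1) * φ (ta - tb k))) = 0 := by
        rw [Finset.sum_sub_distrib, h, sub_self]
      have hall := (Finset.sum_eq_zero_iff_of_nonneg
        (fun k hk => sub_nonneg.mpr (hkey k hk).1)).mp hzero
      have hdiff : ∀ k ∈ Finset.Icc 1 (K-1), b k - a = tb k - ta := by
        intro k hk
        exact (hkey k hk).2.mp (by linarith [hall k hk])
      have h1mem : 1 ∈ Finset.Icc 1 (K-1) := by simp [Finset.mem_Icc]; omega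
      have ha : a = ta := by
        have := hdiff 1 h1mem
        rw [hb1, htb1] at this
        linarith
      refine ⟨ha, fun k hk => ?_⟩
      have := hdiff k hk
      rw [ha] at this
      linarith
    · rintro ⟨rfl, hbk⟩
      exact Finset.sum_congr rfl (fun k hk => by rw [hbk k hk])
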